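/- arXiv:1703.05183 — 3 statements merged into one kernel-verified Lean document; each statement's English description precedes it below -/
import Mathlib

section
/- For every β > 1 there exists a unique m > 0 with tanh(βm) = m, and moreover this m satisfies m ∈ (0,1). -/
/-!
The positive solutions of `tanh (β m) = m` are, after the substitution `x = β m`, the positive
points where the graph of `tanh` meets the line `y = x / β`. Since `tanh' 0 = 1 > 1 / β` the graph
starts above the line, and since `tanh < 1` it is below the line at `x = β`, so the intermediate
value theorem gives a crossing. A strictly concave function vanishing at `0` meets a line through
the origin at most once in `(0, ∞)`, and `tanh` is strictly concave on `[0, ∞)` because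
`tanh'' = -2 tanh (1 - tanh ^ 2)`. Finally `m = tanh (β m) < 1`.
-/

open Set Topology

namespace Real

theorem hasDerivAt_tanh (x : ℝ) : HasDerivAt tanh (1 - tanh x ^ 2) x := by
  have h := (hasDerivAt_sinh x).div (hasDerivAt_cosh x) (cosh_pos x).ne'
  have htanh : sinh / cosh = tanh := funext fun y => (tanh_eq_sinh_div_cosh y).symm
  rw [htanh] at h
  refine h.congr_deriv ?_
  rw [tanh_eq_sinh_div_cosh]
  field_simp

theorem deriv_tanh : deriv tanh = fun x => 1 - tanh x ^ 2 :=
  funext fun x => (hasDerivAt_tanh x).deriv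

theorem continuous_tanh : Continuous tanh :=
  continuous_iff_continuousAt.2 fun x => (hasDerivAt_tanh x).continuousAt

theorem tanh_pos {x : ℝ} (hx : 0 < x) : 0 < tanh x := by
  rw [tanh_eq_sinh_div_cosh]
  exact div_pos (sinh_pos_iff.2 hx) (cosh_pos x)

theorem strictConcaveOn_tanh : StrictConcaveOn ℝ (Ici 0) tanh := by
  refine strictConcaveOn_of_deriv2_neg (convex_Ici 0) continuous_tanh.continuousOn fun x hx => ?_
  rw [interior_Ici] at hx
  have h2 : HasDerivAt (fun y => 1 - tanh y ^ 2) (-(2 * tanh x * (1 - tanh x ^ 2))) x := by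
    simpa using ((hasDerivAt_tanh x).pow 2).const_sub 1
  rw [Function.iterate_succ_apply, Function.iterate_one, deriv_tanh, h2.deriv]
  have h0 := tanh_pos hx
  have h1 := tanh_lt_one x
  nlinarith

end Real

theorem HasDerivAt.eventually_nhdsGT_lt {f : ℝ → ℝ} {f' r x : ℝ} (hf : HasDerivAt f f' x)
    (hr : r < f') : ∀ᶠ z in 𝓝[>] x, f x + r * (z - x) < f z := by
  have hslope : ∀ᶠ z in 𝓝[>] x, r < slope f x z :=
    (hasDerivAt_iff_tendsto_slope.1 hf).mono_left (nhdsGT_le_nhdsNE x) |>.eventually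
      (eventually_gt_nhds hr)
  filter_upwards [hslope, self_mem_nhdsWithin] with z hz (hxz : x < z)
  rw [slope_def_field, lt_div_iff₀ (sub_pos.2 hxz)] at hz
  linarith

theorem exists_mem_Ioo_apply_eq_mul {f : ℝ → ℝ} {d c b : ℝ} (hf : ContinuousOn f (Icc 0 b))
    (hf0 : f 0 = 0) (hd : HasDerivAt f d 0) (hcd : c < d) (hb : 0 < b) (hfb : f b < c * b) :
    ∃ x ∈ Ioo 0 b, f x = c * x := by
  obtain ⟨a, hfa, hab⟩ : ∃ a, c * a < f a ∧ a ∈ Ioo 0 b := by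
    have habove := hd.eventually_nhdsGT_lt hcd
    simp only [hf0, sub_zero, zero_add] at habove
    exact (habove.and (Ioo_mem_nhdsGT hb)).exists
  have hg : ContinuousOn (fun x => f x - c * x) (Icc a b) :=
    (hf.mono (Icc_subset_Icc_left hab.1.le)).sub (continuousOn_const.mul continuousOn_id)
  obtain ⟨x, hx, hgx⟩ := intermediate_value_Ioo' hab.2.le hg
    (show (0 : ℝ) ∈ Ioo (f b - c * b) (f a - c * a) from ⟨by linarith, by linarith⟩)
  exact ⟨x, ⟨hab.1.trans hx.1, hx.2⟩, sub_eq_zero.1 hgx⟩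

theorem StrictConcaveOn.eq_of_apply_eq_mul {f : ℝ → ℝ} {s : Set ℝ} (hf : StrictConcaveOn ℝ s f)
    (h0 : 0 ∈ s) (hf0 : 0 ≤ f 0) {c a b : ℝ} (ha : a ∈ s) (hb : b ∈ s) (ha0 : 0 < a)
    (hb0 : 0 < b) (hfa : f a = c * a) (hfb : f b = c * b) : a = b := by
  wlog hab : a < b generalizing a b
  · rcases (not_lt.1 hab).lt_or_eq with hba | hba
    · exact (this hb ha hb0 ha0 hfb hfa hba).symm
    · exact hba.symm
  -- `a` is the convex combination `(1 - t) • 0 + t • b` with `t = a / b`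
  set t := a / b
  have ht : 0 < t := div_pos ha0 hb0
  have ht1 : t < 1 := (div_lt_one hb0).2 hab
  have htb : t * b = a := div_mul_cancel₀ a hb0.ne'
  have key := hf.2 h0 hb (ha0.trans hab).ne (sub_pos.2 ht1) ht (by ring)
  simp only [smul_eq_mul, mul_zero, zero_add, htb, hfa, hfb] at key
  have htcb : t * (c * b) = c * a := by rw [← htb]; ring
  nlinarith [mul_nonneg (sub_pos.2 ht1).le hf0]

/-- For `β > 1` there is a unique `m > 0` with `tanh (β m) = m`, and this `m` lies in `(0,1)`. -/
theorem curie_weiss_magnetization (β : ℝ) (hβ : 1 < β) :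
    (∃! m : ℝ, 0 < m ∧ Real.tanh (β * m) = m) ∧
      ∀ m : ℝ, 0 < m → Real.tanh (β * m) = m → m ∈ Set.Ioo (0 : ℝ) 1 := by
  have hβ0 : 0 < β := one_pos.trans hβ
  have hfixed_iff : ∀ m, Real.tanh (β * m) = m ↔ Real.tanh (β * m) = β⁻¹ * (β * m) := fun m => by
    rw [inv_mul_cancel_left₀ hβ0.ne']
  have hderiv : HasDerivAt Real.tanh 1 0 := by simpa using Real.hasDerivAt_tanh 0
  obtain ⟨x, hx, hfx⟩ := exists_mem_Ioo_apply_eq_mul Real.continuous_tanh.continuousOn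
    Real.tanh_zero hderiv (inv_lt_one_of_one_lt₀ hβ) hβ0
    (by simpa [inv_mul_cancel₀ hβ0.ne'] using Real.tanh_lt_one β)
  refine ⟨⟨x / β, ⟨div_pos hx.1 hβ0, ?_⟩, ?_⟩, fun m hm0 hm => ⟨hm0, hm ▸ Real.tanh_lt_one _⟩⟩
  · rwa [hfixed_iff, mul_div_cancel₀ x hβ0.ne']
  · rintro m ⟨hm0, hm⟩
    have hβm : 0 < β * m := mul_pos hβ0 hm0
    have hunique : β * m = x := Real.strictConcaveOn_tanh.eq_of_apply_eq_mul self_mem_Ici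
      Real.tanh_zero.ge hβm.le hx.1.le hβm hx.1 ((hfixed_iff m).1 hm) hfx
    rw [← hunique, mul_div_cancel_left₀ m hβ0.ne']
end

section
/- Let β > 1 and let m = m(β) ∈ (0,1) be the unique strictly positive solution of tanh(βm) = m. Then the derivative F'_β is strictly negative on (0,m) and strictly positive on (m,1) (equivalently, F_β is strictly decreasing on [0,m] and strictly increasing on [m,1)), and the second derivative satisfies F''_β(m) > 0. -/
/-- The function `F_β`. -/
noncomputable def Fbeta (β t : ℝ) : ℝ :=
  1 / β * (1 / 2 * Real.log ((1 + t) / (1 - t))) ^ 2 + Real.log (1 - t ^ 2)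

/-!
On `(-1, 1)` we have `F_β = artanh² / β + log (1 - t²)`, hence
`F_β' t = 2 / (β (1 - t²)) · g t` with `g t = artanh t - β t`. The function `g` is strictly convex
on `[0, 1)` (its derivative `(1 - t²)⁻¹ - β` increases) and vanishes at `0` and at `m`, because
`artanh m = artanh (tanh (β m)) = β m`. A strictly convex function with two zeros is negative
between them, positive beyond the larger one and has positive derivative there. Finally, as
`g m = 0`, the product rule gives `F_β'' m = 2 / (β (1 - m²)) · g' m > 0`.
-/

open Set Real

lemma Real.hasDerivAt_artanh {x : ℝ} (hx : x ∈ Ioo (-1) 1) :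
    HasDerivAt artanh (1 - x ^ 2)⁻¹ x := by
  have hpos : 0 < 1 + x := by linarith [hx.1]
  have hneg : 0 < 1 - x := by linarith [hx.2]
  have hlog : HasDerivAt (fun y => 1 / 2 * (log (1 + y) - log (1 - y))) (1 - x ^ 2)⁻¹ x := by
    have h := ((((hasDerivAt_id x).const_add 1).log hpos.ne').sub
      (((hasDerivAt_id x).const_sub 1).log hneg.ne')).const_mul (1 / 2 : ℝ)
    refine h.congr_deriv ?_
    rw [show 1 - x ^ 2 = (1 + x) * (1 - x) by ring]
    simp only [id]
    field_simp
    ring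
  refine hlog.congr_of_eventuallyEq ?_
  filter_upwards [Ioo_mem_nhds hx.1 hx.2] with y hy
  rw [artanh_eq_half_log (Ioo_subset_Icc_self hy), log_div (by linarith [hy.1]) (by linarith [hy.2])]

lemma Real.strictConvexOn_artanh : StrictConvexOn ℝ (Ico 0 1) artanh := by
  refine StrictMonoOn.strictConvexOn_of_deriv (convex_Ico 0 1) ?_ ?_
  · intro x hx
    exact (hasDerivAt_artanh ⟨by linarith [hx.1], hx.2⟩).continuousAt.continuousWithinAt
  · rw [interior_Ico]
    intro x hx y hy hxy
    rw [(hasDerivAt_artanh ⟨by linarith [hx.1], hx.2⟩).deriv,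
      (hasDerivAt_artanh ⟨by linarith [hy.1], hy.2⟩).deriv]
    gcongr
    · nlinarith [hy.2, hy.1]
    · nlinarith [hx.1]

lemma strictConvexOn_artanh_sub_mul (β : ℝ) :
    StrictConvexOn ℝ (Ico 0 1) (fun t => artanh t - β * t) :=
  strictConvexOn_artanh.sub_concaveOn ((LinearMap.mul ℝ ℝ β).concaveOn (convex_Ico 0 1))

lemma hasDerivAt_artanh_sub_mul (β : ℝ) {x : ℝ} (hx : x ∈ Ioo (-1) 1) :
    HasDerivAt (fun t => artanh t - β * t) ((1 - x ^ 2)⁻¹ - β) x :=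
  ((hasDerivAt_artanh hx).sub ((hasDerivAt_id x).const_mul β)).congr_deriv (by rw [mul_one])

section TwoZeros

variable {s : Set ℝ} {f : ℝ → ℝ} {a b t : ℝ}

lemma StrictConvexOn.neg_of_mem_Ioo_of_zeros (hf : StrictConvexOn ℝ s f) (ha : a ∈ s) (hb : b ∈ s)
    (hfa : f a = 0) (hfb : f b = 0) (ht : t ∈ Ioo a b) : f t < 0 := by
  have h := hf.slope_strict_mono_adjacent ha hb ht.1 ht.2
  rw [hfa, hfb, sub_zero, zero_sub, neg_div] at h
  by_contra! hft
  have := div_nonneg hft (sub_pos.2 ht.1).le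
  have := div_nonneg hft (sub_pos.2 ht.2).le
  linarith

lemma StrictConvexOn.pos_of_zeros_of_lt (hf : StrictConvexOn ℝ s f) (ha : a ∈ s) (ht : t ∈ s)
    (hab : a < b) (hbt : b < t) (hfa : f a = 0) (hfb : f b = 0) : 0 < f t := by
  have h := hf.slope_strict_mono_adjacent ha ht hab hbt
  rw [hfa, hfb, sub_zero, zero_div, sub_zero] at h
  exact (div_pos_iff_of_pos_right (sub_pos.2 hbt)).1 h

lemma StrictConvexOn.deriv_pos_of_zeros (hf : StrictConvexOn ℝ s f) (ha : a ∈ s) (hb : b ∈ s)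
    (hab : a < b) (hfa : f a = 0) (hfb : f b = 0) {f' : ℝ} (hf' : HasDerivAt f f' b) : 0 < f' := by
  simpa [slope_def_field, hfa, hfb] using hf.slope_lt_of_hasDerivAt ha hb hab hf'

end TwoZeros

lemma Fbeta_eq_artanh (β : ℝ) {t : ℝ} (ht : t ∈ Icc (-1) 1) :
    Fbeta β t = 1 / β * artanh t ^ 2 + log (1 - t ^ 2) := by
  rw [Fbeta, artanh_eq_half_log ht]

lemma hasDerivAt_Fbeta {β t : ℝ} (hβ : β ≠ 0) (ht : t ∈ Ioo (-1) 1) :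
    HasDerivAt (Fbeta β) (2 / (β * (1 - t ^ 2)) * (artanh t - β * t)) t := by
  have ht2 : 0 < 1 - t ^ 2 := by nlinarith [ht.1, ht.2]
  have hsq : HasDerivAt (fun t => 1 - t ^ 2) (-(2 * t)) t := by
    simpa using (hasDerivAt_pow 2 t).const_sub 1
  have h := (((hasDerivAt_artanh ht).pow 2).const_mul (1 / β)).add (hsq.log ht2.ne')
  refine (h.congr_deriv ?_).congr_of_eventuallyEq ?_
  · field_simp
    ring
  · filter_upwards [Ioo_mem_nhds ht.1 ht.2] with y hy
    exact Fbeta_eq_artanh β (Ioo_subset_Icc_self hy)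

lemma hasDerivAt_deriv_Fbeta_of_artanh_eq {β m : ℝ} (hβ : β ≠ 0) (hm : m ∈ Ioo (-1) 1)
    (hfix : artanh m = β * m) :
    HasDerivAt (deriv (Fbeta β)) (2 / (β * (1 - m ^ 2)) * ((1 - m ^ 2)⁻¹ - β)) m := by
  have hm2 : β * (1 - m ^ 2) ≠ 0 := mul_ne_zero hβ (by nlinarith [hm.1, hm.2])
  have hfactor : DifferentiableAt ℝ (fun t => 2 / (β * (1 - t ^ 2))) m := by
    fun_prop (disch := exact hm2)
  have h := hfactor.hasDerivAt.mul (hasDerivAt_artanh_sub_mul β hm)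
  refine (h.congr_deriv ?_).congr_of_eventuallyEq ?_
  · simp [hfix]
  · filter_upwards [Ioo_mem_nhds hm.1 hm.2] with y hy
    exact (hasDerivAt_Fbeta hβ hy).deriv

/-- For `β > 1`, with `m ∈ (0,1)` the strictly positive solution of `tanh (βm) = m`:
`F_β' < 0` on `(0,m)`, `F_β' > 0` on `(m,1)`, and `F_β''(m) > 0`. -/
theorem Fbeta_monotonicity (β m : ℝ) (hβ : 1 < β) (hm : 0 < m) (hm1 : m < 1)
    (htanh : Real.tanh (β * m) = m) :
    (∀ t ∈ Set.Ioo 0 m, deriv (Fbeta β) t < 0) ∧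
      (∀ t ∈ Set.Ioo m 1, 0 < deriv (Fbeta β) t) ∧
      0 < deriv (deriv (Fbeta β)) m := by
  have hβ0 : 0 < β := zero_lt_one.trans hβ
  have hfix : artanh m = β * m := by simpa [htanh] using artanh_tanh (β * m)
  have hfactor_pos {t : ℝ} (ht : t ∈ Ioo (-1) 1) : 0 < 2 / (β * (1 - t ^ 2)) := by
    have : 0 < 1 - t ^ 2 := by nlinarith [ht.1, ht.2]
    positivity
  have hconv := strictConvexOn_artanh_sub_mul β
  have h0 : (0 : ℝ) ∈ Ico 0 1 := ⟨le_rfl, one_pos⟩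
  have hmIco : m ∈ Ico 0 1 := ⟨hm.le, hm1⟩
  have hmIoo : m ∈ Ioo (-1) 1 := ⟨by linarith, hm1⟩
  have hg0 : artanh 0 - β * 0 = 0 := by simp [artanh_zero]
  have hgm : artanh m - β * m = 0 := sub_eq_zero.2 hfix
  refine ⟨fun t ht => ?_, fun t ht => ?_, ?_⟩
  · have htIoo : t ∈ Ioo (-1) 1 := ⟨by linarith [ht.1], by linarith [ht.2]⟩
    rw [(hasDerivAt_Fbeta hβ0.ne' htIoo).deriv]
    exact mul_neg_of_pos_of_neg (hfactor_pos htIoo)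
      (hconv.neg_of_mem_Ioo_of_zeros h0 hmIco hg0 hgm ht)
  · have htIoo : t ∈ Ioo (-1) 1 := ⟨by linarith [ht.1], ht.2⟩
    rw [(hasDerivAt_Fbeta hβ0.ne' htIoo).deriv]
    exact mul_pos (hfactor_pos htIoo)
      (hconv.pos_of_zeros_of_lt h0 ⟨by linarith [ht.1], ht.2⟩ hm ht.1 hg0 hgm)
  · rw [(hasDerivAt_deriv_Fbeta_of_artanh_eq hβ0.ne' hmIoo hfix).deriv]
    exact mul_pos (hfactor_pos hmIoo)
      (hconv.deriv_pos_of_zeros h0 hmIco hm hg0 hgm (hasDerivAt_artanh_sub_mul β hmIoo))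
end

section
/- Let β > 1. Then for all t ∈ (−1,1) one has e^{−F_β(t)/2} ≤ e^{9β/2}·(1 − |t|). -/
lemma Fbeta_key (β : ℝ) (hβ : 1 < β) (t : ℝ) (h0 : 0 ≤ t) (h1 : t < 1) :
    Real.exp (-Fbeta β t / 2) ≤ Real.exp (9 * β / 2) * (1 - t) := by
  have h1t : (0:ℝ) < 1 - t := by linarith
  have h1p : (0:ℝ) < 1 + t := by linarith
  set x : ℝ := -Real.log (1 - t) with hx
  have hx0 : 0 ≤ x := by
    have : Real.log (1 - t) ≤ 0 := Real.log_nonpos (by linarith) (by linarith)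
    linarith
  have hlogp : 0 ≤ Real.log (1 + t) := Real.log_nonneg (by linarith)
  have hdiv : Real.log ((1 + t) / (1 - t)) = Real.log (1 + t) + x := by
    rw [Real.log_div (by linarith) (by linarith)]; ring
  have hsq : Real.log (1 - t ^ 2) = Real.log (1 + t) - x := by
    have : 1 - t ^ 2 = (1 + t) * (1 - t) := by ring
    rw [this, Real.log_mul (by linarith) (by linarith)]; ring
  have hβ0 : (0:ℝ) < β := by linarith
  -- bound on the square term
  have hL : x / 2 ≤ 1 / 2 * Real.log ((1 + t) / (1 - t)) := by
    rw [hdiv]; linarith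
  have hL2 : (x / 2) ^ 2 ≤ (1 / 2 * Real.log ((1 + t) / (1 - t))) ^ 2 :=
    pow_le_pow_left₀ (by linarith) hL 2
  have hF : 9 * β / 2 - x + Fbeta β t / 2 ≥ 0 := by
    have hterm : x ^ 2 / (4 * β) ≤ 1 / β * (1 / 2 * Real.log ((1 + t) / (1 - t))) ^ 2 := by
      rw [div_le_iff₀ (by positivity : (0:ℝ) < 4 * β)]
      have hinv : 1 / β * (1 / 2 * Real.log ((1 + t) / (1 - t))) ^ 2 * (4 * β)
          = 4 * (1 / 2 * Real.log ((1 + t) / (1 - t))) ^ 2 := by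
        field_simp
      rw [hinv]; nlinarith [hL2]
    have hkey : (x - 6 * β) ^ 2 ≥ 0 := sq_nonneg _
    have h2 : x ^ 2 / (4 * β) ≥ 3 * x - 9 * β := by
      rw [ge_iff_le, le_div_iff₀ (by linarith)]
      nlinarith
    unfold Fbeta
    rw [hsq]
    nlinarith
  calc Real.exp (-Fbeta β t / 2) ≤ Real.exp (9 * β / 2 - x) := by
        apply Real.exp_le_exp.2; linarith
    _ = Real.exp (9 * β / 2) * (1 - t) := by
        rw [Real.exp_sub, hx, Real.exp_neg, Real.exp_log h1t, div_eq_mul_inv, inv_inv]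

/-- For `β > 1` and all `t ∈ (-1,1)`: `e^{-F_β(t)/2} ≤ e^{9β/2}·(1 - |t|)`. -/
theorem Fbeta_exp_bound (β : ℝ) (hβ : 1 < β) :
    ∀ t ∈ Set.Ioo (-1 : ℝ) 1,
      Real.exp (-Fbeta β t / 2) ≤ Real.exp (9 * β / 2) * (1 - |t|) := by
  rintro t ⟨ht1, ht2⟩
  have heq : Fbeta β t = Fbeta β |t| := by
    rcases abs_cases t with ⟨h, _⟩ | ⟨h, hneg⟩
    · rw [h]
    · rw [h]
      unfold Fbeta
      have h1 : Real.log ((1 + -t) / (1 - -t)) = -Real.log ((1 + t) / (1 - t)) := by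
        rw [show (1:ℝ) + -t = 1 - t by ring, show (1:ℝ) - -t = 1 + t by ring,
          ← inv_div, Real.log_inv]
      rw [h1]
      ring_nf
  rw [heq]
  exact Fbeta_key β hβ |t| (abs_nonneg t) (abs_lt.2 ⟨ht1, ht2⟩)
end
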